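/- The Hilbert series of the graded algebra A = H_*(M̄_{0,5}) in its Keel presentation on the five side variables is 1 + 5t + t^2; equivalently, dim_Q A_0 = 1, dim_Q A_1 = 5, dim_Q A_2 = 1, and A_n = 0 for n ≥ 3. -/

import Mathlib

/-!
Write `xᵢ` for the image of `X i` in `A`. The relations `xᵢxᵢ₊₁ = 0` and
`(xᵢ + xᵢ₊₂ - xᵢ₊₁)xₖ = 0` for `k = i, i + 2` give `xᵢ² = -xᵢxᵢ₊₂ = xᵢ₊₂²`; as `2` generates `ℤ/5`,
all squares equal `s = x₀²`, and every product is a multiple `x_a x_b = β(a, b) s`, where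
`β = keelForm` depends only on `b - a`. Moreover `s x_c = x_{c+1}² x_c = 0`. Since `A_n = (A_1)ⁿ`,
the graded pieces are spanned by `1`, by the `xᵢ`, by `s`, and by nothing in degrees `n ≥ 3`.

Conversely, the ideal is generated by quadrics, so it has no components of degree `< 2` and its
degree-2 component is the `ℚ`-span of the generators. The functional
`p ↦ ∑ β(a, b) ∂ₐ∂_b p(0)` kills every generator, but not `X 0 * X 0`, on which it is `2`.
-/

open MvPolynomial

/-- The quadratic Keel relations for `M̄_{0,5}` in the side variables `x_i`, `i ∈ ℤ/5ℤ`. -/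
noncomputable def keelRels5 : Set (MvPolynomial (ZMod 5) ℚ) :=
  {p | ∃ i : ZMod 5, p = X i * X (i + 1)} ∪
  {p | ∃ i k : ZMod 5, (k = i ∨ k = i - 1 ∨ k = i + 2 ∨ k = i + 3) ∧
      p = (X i + X (i + 2) - X (i + 1)) * X k}

noncomputable def keelIdeal5 : Ideal (MvPolynomial (ZMod 5) ℚ) := Ideal.span keelRels5

/-- The degree-`n` graded component of `A = ℚ[x_0,…,x_4]/I`. -/
noncomputable def keelComp5 (n : ℕ) :
    Submodule ℚ (MvPolynomial (ZMod 5) ℚ ⧸ keelIdeal5) :=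
  (MvPolynomial.homogeneousSubmodule (ZMod 5) ℚ n).map
    (Ideal.Quotient.mkₐ ℚ keelIdeal5).toLinearMap

namespace MvPolynomial

variable {σ R : Type*} [CommSemiring R]

attribute [local instance] gradedAlgebra in
theorem homogeneousComponent_mul_of_isHomogeneous {p q : MvPolynomial σ R} {m : ℕ}
    (hq : q.IsHomogeneous m) (n : ℕ) :
    homogeneousComponent n (p * q) =
      if m ≤ n then homogeneousComponent (n - m) p * q else 0 := by
  rw [← decomposition.decompose'_apply, ← decomposition.decompose'_apply]
  exact DirectSum.coe_decompose_mul_of_right_mem (homogeneousSubmodule σ R) n hq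

theorem homogeneousComponent_eq_zero_of_mem_ideal_span {S : Set (MvPolynomial σ R)} {m : ℕ}
    (hS : ∀ g ∈ S, g.IsHomogeneous m) {p : MvPolynomial σ R} (hp : p ∈ Ideal.span S)
    {n : ℕ} (hn : n < m) : homogeneousComponent n p = 0 := by
  suffices ∀ a, homogeneousComponent n (a * p) = 0 by simpa using this 1
  induction hp using Submodule.span_induction with
  | mem g hg =>
    intro a
    rw [homogeneousComponent_mul_of_isHomogeneous (hS g hg), if_neg hn.not_ge]
  | zero => simp
  | add x y _ _ hx hy => intro a; rw [mul_add, map_add, hx, hy, add_zero]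
  | smul b x _ hx => intro a; rw [smul_eq_mul, ← mul_assoc, hx]

theorem homogeneousComponent_mem_span_of_mem_ideal_span {S : Set (MvPolynomial σ R)} {m : ℕ}
    (hS : ∀ g ∈ S, g.IsHomogeneous m) {p : MvPolynomial σ R} (hp : p ∈ Ideal.span S) :
    homogeneousComponent m p ∈ Submodule.span R S := by
  suffices ∀ a, homogeneousComponent m (a * p) ∈ Submodule.span R S by simpa using this 1
  induction hp using Submodule.span_induction with
  | mem g hg =>
    intro a
    rw [homogeneousComponent_mul_of_isHomogeneous (hS g hg), if_pos le_rfl, Nat.sub_self,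
      homogeneousComponent_zero, C_mul']
    exact Submodule.smul_mem _ _ (Submodule.subset_span hg)
  | zero => simp
  | add x y _ _ hx hy => intro a; rw [mul_add, map_add]; exact add_mem (hx a) (hy a)
  | smul b x _ hx => intro a; rw [smul_eq_mul, ← mul_assoc]; exact hx _

theorem map_homogeneousSubmodule_eq_span_pow {A : Type*} [Semiring A] [Algebra R A]
    (f : MvPolynomial σ R →ₐ[R] A) (n : ℕ) :
    (homogeneousSubmodule σ R n).map f.toLinearMap =
      Submodule.span R (Set.range fun i => f (X i)) ^ n := by
  rw [← homogeneousSubmodule_one_pow, Submodule.map_pow, homogeneousSubmodule_one_eq_span_X,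
    Submodule.map_span, ← Set.range_comp]
  rfl

variable [Fintype σ]

noncomputable def hessianPairing (β : σ → σ → R) : MvPolynomial σ R →ₗ[R] R :=
  ∑ a, ∑ b, β a b • (lcoeff R 0 ∘ₗ (pderiv a).toLinearMap ∘ₗ (pderiv b).toLinearMap)

theorem hessianPairing_apply (β : σ → σ → R) (p : MvPolynomial σ R) :
    hessianPairing β p = ∑ a, ∑ b, β a b * coeff 0 (pderiv a (pderiv b p)) := by
  simp only [hessianPairing, LinearMap.coe_sum, LinearMap.coe_smul, LinearMap.coe_comp,
    Derivation.coeFn_coe, Finset.sum_apply, Pi.smul_apply, Function.comp_apply, lcoeff_apply,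
    smul_eq_mul]

theorem hessianPairing_X_mul_X (β : σ → σ → R) (i j : σ) :
    hessianPairing β (X i * X j) = β i j + β j i := by
  classical
  have hderiv : ∀ a b, coeff 0 (pderiv a (pderiv b (X i * X j : MvPolynomial σ R))) =
      (if a = j ∧ b = i then 1 else 0) + (if a = i ∧ b = j then 1 else 0) := by
    intro a b
    simp only [Derivation.leibniz, pderiv_X, Pi.single_apply, smul_eq_mul, mul_ite, mul_one,
      mul_zero]
    split_ifs <;> subst_vars <;> simp_all [pderiv_X]
  rw [hessianPairing_apply]
  simp only [hderiv, mul_add, Finset.sum_add_distrib, mul_ite, mul_one, mul_zero, ite_and]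
  simp [Finset.sum_ite_irrel, add_comm]

end MvPolynomial

section Keel

local notation "𝒜" => MvPolynomial (ZMod 5) ℚ ⧸ keelIdeal5

def keelForm (i j : ZMod 5) : ℤ := ![1, 0, -1, -1, 0] (j - i)

theorem keelForm_comm : ∀ i j, keelForm i j = keelForm j i := by decide

theorem keelForm_add_one : ∀ i, keelForm i (i + 1) = 0 := by decide

theorem keelForm_linear_relation : ∀ i k : ZMod 5, (k = i ∨ k = i - 1 ∨ k = i + 2 ∨ k = i + 3) →
    keelForm i k + keelForm (i + 2) k - keelForm (i + 1) k = 0 := by decide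

noncomputable def keelGen (i : ZMod 5) : 𝒜 := Ideal.Quotient.mk keelIdeal5 (X i)

theorem keelGen_mul_keelGen_add_one (i : ZMod 5) : keelGen i * keelGen (i + 1) = 0 := by
  rw [keelGen, keelGen, ← map_mul, Ideal.Quotient.eq_zero_iff_mem]
  exact Ideal.subset_span (Or.inl ⟨i, rfl⟩)

theorem keelGen_linear_relation (i k : ZMod 5) (hk : k = i ∨ k = i - 1 ∨ k = i + 2 ∨ k = i + 3) :
    (keelGen i + keelGen (i + 2) - keelGen (i + 1)) * keelGen k = 0 := by
  simp only [keelGen, ← map_add, ← map_sub, ← map_mul, Ideal.Quotient.eq_zero_iff_mem]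
  exact Ideal.subset_span (Or.inr ⟨i, k, hk, rfl⟩)

theorem keelGen_mul_self_eq_neg (i : ZMod 5) :
    keelGen i * keelGen i = -(keelGen i * keelGen (i + 2)) := by
  linear_combination keelGen_linear_relation i i (Or.inl rfl) + keelGen_mul_keelGen_add_one i

theorem keelGen_add_two_mul_self_eq_neg (i : ZMod 5) :
    keelGen (i + 2) * keelGen (i + 2) = -(keelGen i * keelGen (i + 2)) := by
  have h := keelGen_mul_keelGen_add_one (i + 1)
  rw [show i + 1 + 1 = i + 2 by ring] at h
  linear_combination keelGen_linear_relation i (i + 2) (Or.inr (Or.inr (Or.inl rfl))) + h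

theorem keelGen_mul_self (i : ZMod 5) : keelGen i * keelGen i = keelGen 0 * keelGen 0 := by
  have hper : Function.Periodic (fun j => keelGen j * keelGen j) 2 := fun j =>
    (keelGen_add_two_mul_self_eq_neg j).trans (keelGen_mul_self_eq_neg j).symm
  have hi : i = 0 + (3 * i.val : ℕ) * 2 := by
    push_cast [ZMod.natCast_val, ZMod.cast_id]
    grind
  rw [hi]
  exact hper.nat_mul _ 0

theorem keelGen_mul_keelGen (a b : ZMod 5) :
    keelGen a * keelGen b = (keelForm a b : ℚ) • (keelGen 0 * keelGen 0) := by
  obtain ⟨d, rfl⟩ : ∃ d, b = a + d := ⟨b - a, by ring⟩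
  rcases (by decide : ∀ d : ZMod 5, d = 0 ∨ d = 1 ∨ d = 2 ∨ d = 3 ∨ d = 4) d with
    rfl | rfl | rfl | rfl | rfl <;>
    simp only [keelForm, add_zero, sub_self, add_sub_cancel_left, Matrix.cons_val, Int.reduceNeg,
      Int.cast_zero, Int.cast_one, Int.cast_neg, zero_smul, one_smul, neg_smul]
  · exact keelGen_mul_self a
  · exact keelGen_mul_keelGen_add_one a
  · linear_combination keelGen_mul_self_eq_neg a - keelGen_mul_self a
  · have h := keelGen_add_two_mul_self_eq_neg (a + 3)
    rw [show a + 3 + 2 = a by grind] at h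
    linear_combination h - keelGen_mul_self a
  · have h := keelGen_mul_keelGen_add_one (a + 4)
    rw [show a + 4 + 1 = a by grind] at h
    linear_combination h

theorem keelGen_mul_keelGen_mul_keelGen (a b c : ZMod 5) :
    keelGen a * keelGen b * keelGen c = 0 := by
  rw [keelGen_mul_keelGen, smul_mul_assoc, ← keelGen_mul_self (c + 1), mul_assoc,
    mul_comm _ (keelGen c), keelGen_mul_keelGen_add_one, mul_zero, smul_zero]

theorem keelComp5_eq_span_pow (n : ℕ) :
    keelComp5 n = Submodule.span ℚ (Set.range keelGen) ^ n :=
  map_homogeneousSubmodule_eq_span_pow _ n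

theorem span_keelGen_sq :
    Submodule.span ℚ (Set.range keelGen) ^ 2 = ℚ ∙ (keelGen 0 * keelGen 0) := by
  rw [sq, Submodule.span_mul_span]
  apply le_antisymm
  · rw [Submodule.span_le]
    rintro _ ⟨_, ⟨a, rfl⟩, _, ⟨b, rfl⟩, rfl⟩
    exact Submodule.mem_span_singleton.mpr ⟨_, (keelGen_mul_keelGen a b).symm⟩
  · exact Submodule.span_mono (Set.singleton_subset_iff.mpr (Set.mul_mem_mul ⟨0, rfl⟩ ⟨0, rfl⟩))

theorem span_keelGen_pow_three : Submodule.span ℚ (Set.range keelGen) ^ 3 = ⊥ := by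
  rw [Submodule.pow_succ, span_keelGen_sq, Submodule.span_mul_span, Submodule.span_eq_bot]
  rintro _ ⟨_, rfl, _, ⟨c, rfl⟩, rfl⟩
  exact keelGen_mul_keelGen_mul_keelGen 0 0 c

theorem keelRels5_isHomogeneous : ∀ g ∈ keelRels5, g.IsHomogeneous 2 := by
  have hX : ∀ i : ZMod 5, (X i : MvPolynomial (ZMod 5) ℚ).IsHomogeneous 1 := isHomogeneous_X ℚ
  rintro _ (⟨i, rfl⟩ | ⟨i, k, -, rfl⟩)
  · exact (hX i).mul (hX (i + 1))
  · exact (((hX i).add (hX (i + 2))).sub (hX (i + 1))).mul (hX k)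

theorem keelIdeal5_ne_top : keelIdeal5 ≠ ⊤ := by
  rw [Ideal.ne_top_iff_one]
  intro h
  simpa using homogeneousComponent_eq_zero_of_mem_ideal_span keelRels5_isHomogeneous h two_pos

instance : Nontrivial 𝒜 := Ideal.Quotient.nontrivial_iff.mpr keelIdeal5_ne_top

theorem linearIndependent_keelGen : LinearIndependent ℚ keelGen := by
  rw [Fintype.linearIndependent_iff]
  intro g hg
  have hmem : ∑ i, g i • X i ∈ keelIdeal5 := by
    rw [← Ideal.Quotient.eq_zero_iff_mem, ← Ideal.Quotient.mkₐ_eq_mk ℚ, map_sum]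
    simpa only [map_smul, Ideal.Quotient.mkₐ_eq_mk, keelGen] using hg
  have := homogeneousComponent_eq_zero_of_mem_ideal_span keelRels5_isHomogeneous hmem one_lt_two
  simp only [map_sum, map_smul, homogeneousComponent_of_mem (isHomogeneous_X ℚ _), if_pos] at this
  exact Fintype.linearIndependent_iff.mp (linearIndependent_X (ZMod 5) ℚ) g this

theorem keelRels5_subset_ker_hessianPairing :
    keelRels5 ⊆ LinearMap.ker (hessianPairing fun i j => (keelForm i j : ℚ)) := by
  rintro _ (⟨i, rfl⟩ | ⟨i, k, hk, rfl⟩)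
  · simp [hessianPairing_X_mul_X, keelForm_add_one, keelForm_comm (i + 1)]
  · have h : ((keelForm i k + keelForm (i + 2) k - keelForm (i + 1) k : ℤ) : ℚ) = 0 := by
      exact_mod_cast keelForm_linear_relation i k hk
    push_cast at h
    simp only [SetLike.mem_coe, LinearMap.mem_ker, add_mul, sub_mul, map_add, map_sub,
      hessianPairing_X_mul_X, keelForm_comm k]
    linear_combination 2 * h

theorem keelGen_mul_self_ne_zero : keelGen 0 * keelGen 0 ≠ 0 := by
  rw [keelGen, ← map_mul, Ne, Ideal.Quotient.eq_zero_iff_mem]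
  intro h
  have hspan := homogeneousComponent_mem_span_of_mem_ideal_span keelRels5_isHomogeneous h
  rw [homogeneousComponent_of_mem ((isHomogeneous_X ℚ 0).mul (isHomogeneous_X ℚ 0)), if_pos rfl]
    at hspan
  have := Submodule.span_le.mpr keelRels5_subset_ker_hessianPairing hspan
  simp [hessianPairing_X_mul_X, keelForm] at this

end Keel

/-- the Hilbert series of `A = H_*(M̄_{0,5})` on the five side variables is
`1 + 5t + t²`: `dim A_0 = 1`, `dim A_1 = 5`, `dim A_2 = 1`, and `A_n = 0` for `n ≥ 3`. -/
theorem stmt5 :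
    Module.finrank ℚ (keelComp5 0) = 1 ∧
    Module.finrank ℚ (keelComp5 1) = 5 ∧
    Module.finrank ℚ (keelComp5 2) = 1 ∧
    ∀ n : ℕ, 3 ≤ n → keelComp5 n = ⊥ := by
  refine ⟨?_, ?_, ?_, fun n hn => ?_⟩
  · rw [keelComp5_eq_span_pow, Submodule.pow_zero, Submodule.one_eq_span,
      finrank_span_singleton one_ne_zero]
  · rw [keelComp5_eq_span_pow, Submodule.pow_one, finrank_span_eq_card linearIndependent_keelGen,
      ZMod.card]
  · rw [keelComp5_eq_span_pow, span_keelGen_sq, finrank_span_singleton keelGen_mul_self_ne_zero]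
  · rw [keelComp5_eq_span_pow, ← Nat.sub_add_cancel hn, Submodule.pow_add _ three_ne_zero,
      span_keelGen_pow_three, Submodule.mul_bot]
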